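/- arXiv:1802.04197 — 3 statements merged into one kernel-verified Lean document; each statement's English description precedes it below -/
import Mathlib

section
/- Let $1 < p < 2$. There exists a constant $C_p > 0$ depending only on $p$ such that for all vectors $a, b \in \mathbb{R}$ and all $\epsilon > 0$, $|a-b|^2 (\epsilon + |a|^2 + |b|^2)^{(p-2)/2} \le C_p \big( (\epsilon + |a|^2)^{(p-2)/2} a - (\epsilon + |b|^2)^{(p-2)/2} b \big)(a - b)$. -/
open Real Set

/-! With `q = (p - 2) / 2`, the map `φ x = (ε + x²)^q x` has derivative
`(ε + x²)^(q-1) (ε + (p - 1) x²) ≥ (p - 1) (ε + x²)^q`. Between `b` and `a` we have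
`x² ≤ a² + b²`, and `q ≤ 0`, so `φ' ≥ (p - 1) (ε + a² + b²)^q` there. The mean value theorem then
gives `(φ a - φ b)(a - b) ≥ (p - 1) (ε + a² + b²)^q (a - b)²`, i.e. the claim with
`C_p = 1 / (p - 1)`. -/

lemma hasDerivAt_rpow_add_sq_mul_self {ε : ℝ} (hε : 0 < ε) (q x : ℝ) :
    HasDerivAt (fun x => (ε + x ^ 2) ^ q * x)
      ((ε + x ^ 2) ^ (q - 1) * (ε + (2 * q + 1) * x ^ 2)) x := by
  have hpos : 0 < ε + x ^ 2 := by positivity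
  have hsq : HasDerivAt (fun x : ℝ => ε + x ^ 2) (2 * x) x := by
    simpa using (hasDerivAt_pow 2 x).const_add ε
  refine ((hsq.rpow_const (p := q) (Or.inl hpos.ne')).mul (hasDerivAt_id x)).congr_deriv ?_
  rw [rpow_sub_one hpos.ne']
  field_simp
  simp only [id]
  ring

lemma mul_rpow_le_rpow_sub_one_mul {ε q s x : ℝ} (hε : 0 < ε) (hq : q ≤ 0)
    (hq' : 0 ≤ 2 * q + 1) (hxs : x ^ 2 ≤ s) :
    (2 * q + 1) * (ε + s) ^ q ≤ (ε + x ^ 2) ^ (q - 1) * (ε + (2 * q + 1) * x ^ 2) := by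
  have hpos : 0 < ε + x ^ 2 := by positivity
  calc (2 * q + 1) * (ε + s) ^ q
      ≤ (2 * q + 1) * (ε + x ^ 2) ^ q :=
        mul_le_mul_of_nonneg_left (rpow_le_rpow_of_nonpos hpos (by linarith) hq) hq'
    _ = (ε + x ^ 2) ^ (q - 1) * ((2 * q + 1) * (ε + x ^ 2)) := by
        rw [rpow_sub_one hpos.ne']
        field_simp
    _ ≤ (ε + x ^ 2) ^ (q - 1) * (ε + (2 * q + 1) * x ^ 2) :=
        mul_le_mul_of_nonneg_left (by nlinarith) (rpow_nonneg hpos.le _)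

lemma sq_le_add_sq_of_mem_Icc {a b x : ℝ} (hx : x ∈ Icc b a) : x ^ 2 ≤ a ^ 2 + b ^ 2 := by
  nlinarith [mul_nonneg (sub_nonneg.2 hx.1) (sub_nonneg.2 hx.2), sq_nonneg (a + b - x)]

lemma mul_sub_le_rpow_add_sq_mul_sub {ε q a b : ℝ} (hε : 0 < ε) (hq : q ≤ 0)
    (hq' : 0 ≤ 2 * q + 1) (hba : b ≤ a) :
    (2 * q + 1) * (ε + (a ^ 2 + b ^ 2)) ^ q * (a - b) ≤
      (ε + a ^ 2) ^ q * a - (ε + b ^ 2) ^ q * b := by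
  have hφ := hasDerivAt_rpow_add_sq_mul_self hε q
  refine (convex_Icc b a).mul_sub_le_image_sub_of_le_deriv
    (fun x _ => (hφ x).continuousAt.continuousWithinAt)
    (fun x _ => (hφ x).differentiableAt.differentiableWithinAt) ?_
    b (left_mem_Icc.2 hba) a (right_mem_Icc.2 hba) hba
  intro x hx
  rw [(hφ x).deriv]
  exact mul_rpow_le_rpow_sub_one_mul hε hq hq'
    (sq_le_add_sq_of_mem_Icc (interior_subset hx))

lemma mul_sq_le_rpow_add_sq_mul_sub_mul_sub {ε q : ℝ} (hε : 0 < ε) (hq : q ≤ 0)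
    (hq' : 0 ≤ 2 * q + 1) (a b : ℝ) :
    (2 * q + 1) * (ε + a ^ 2 + b ^ 2) ^ q * (a - b) ^ 2 ≤
      ((ε + a ^ 2) ^ q * a - (ε + b ^ 2) ^ q * b) * (a - b) := by
  wlog hba : b ≤ a generalizing a b
  · have := this b a (le_of_not_ge hba)
    calc _ = (2 * q + 1) * (ε + b ^ 2 + a ^ 2) ^ q * (b - a) ^ 2 := by ring_nf
      _ ≤ _ := this
      _ = _ := by ring
  calc _ = (2 * q + 1) * (ε + (a ^ 2 + b ^ 2)) ^ q * (a - b) * (a - b) := by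
        rw [add_assoc]; ring
    _ ≤ _ := mul_le_mul_of_nonneg_right (mul_sub_le_rpow_add_sq_mul_sub hε hq hq' hba)
        (sub_nonneg.2 hba)

/-- Monotonicity inequality for the regularized singular p-Laplacian nonlinearity,
    scalar case, 1 < p < 2. -/
theorem stmt_0 (p : ℝ) (hp1 : 1 < p) (hp2 : p < 2) :
    ∃ C : ℝ, 0 < C ∧ ∀ a b ε : ℝ, 0 < ε →
      |a - b| ^ 2 * (ε + |a| ^ 2 + |b| ^ 2) ^ ((p - 2) / 2) ≤
        C * (((ε + |a| ^ 2) ^ ((p - 2) / 2) * a - (ε + |b| ^ 2) ^ ((p - 2) / 2) * b) * (a - b)) := by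
  have hp : 0 < p - 1 := sub_pos.2 hp1
  refine ⟨1 / (p - 1), by positivity, fun a b ε hε => ?_⟩
  have key := mul_sq_le_rpow_add_sq_mul_sub_mul_sub (q := (p - 2) / 2) hε
    (by linarith) (by linarith) a b
  rw [show 2 * ((p - 2) / 2) + 1 = p - 1 by ring] at key
  rw [sq_abs, sq_abs, sq_abs, div_mul_eq_mul_div, one_mul, le_div_iff₀ hp]
  linarith
end

section
/- Let $B_R \subset \mathbb{R}^2$ be a ball of radius $R$ centered at a point $a$, and let $v \in C^1(\overline{B_R})$. Suppose $v$ is monotone in the sense of Lebesgue, i.e., for every closed ball $\overline{B_t}(a) \subset B_R$ the maximum and minimum of $v$ over $\overline{B_t}$ are attained on $\partial B_t$. Then for every $0 < r < R$, $(\operatorname{osc}_{B_r} v)^2 \log(R/r) \le \pi \int_{B_R \setminus B_r} |\nabla v(x)|^2 \, dx$. -/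
/-!
Fix `t ∈ [r, R)`. By monotonicity the oscillation of `v` over `B_r` is at most its oscillation on
the circle `∂B_t`. A maximum and a minimum point of `v` on that circle cut it into two arcs, and
along each arc the increment of `v` is bounded by `∫ |∂_θ v|`; hence
`2 osc ≤ ∫ |∂_θ v| dθ ≤ (2π ∫ |∂_θ v|² dθ)^{1/2}` with `|∂_θ v| ≤ t |∇v|`, i.e.
`osc² / t ≤ (π / 2) · t ∫ |∇v|² dθ`. Integrating over `t ∈ [r, R)` in polar coordinates gives
`2 osc² log (R / r) ≤ π ∫_{B_R \ B_r} |∇v|²`.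

Circles and polar coordinates are taken from `ℂ` (`circleMap`, `Complex.polarCoord`); the result
is transported to `EuclideanSpace ℝ (Fin 2)` along the isometry `Complex.orthonormalBasisOneI.repr`.
-/

open Real MeasureTheory Metric Set Function
open scoped ENNReal

theorem sq_setIntegral_le_measureReal_mul_setIntegral_sq {α : Type*} [MeasurableSpace α]
    {μ : Measure α} {s : Set α} {f : α → ℝ} (hs : μ s ≠ ⊤) (hf : IntegrableOn f s μ)
    (hf2 : IntegrableOn (fun x => f x ^ 2) s μ) :
    (∫ x in s, f x ∂μ) ^ 2 ≤ μ.real s * ∫ x in s, f x ^ 2 ∂μ := by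
  rcases eq_or_ne (μ s) 0 with h0 | h0
  · simp [Measure.restrict_eq_zero.2 h0, measureReal_def, h0]
  have hm : 0 < μ.real s := ENNReal.toReal_pos h0 hs
  have jensen := (even_two.convexOn_pow (𝕜 := ℝ)).map_set_average_le
    (continuous_pow 2).continuousOn isClosed_univ h0 hs (by simp) hf hf2
  rw [setAverage_eq, setAverage_eq, smul_eq_mul, smul_eq_mul, mul_pow, inv_pow,
    ← div_eq_inv_mul, ← div_eq_inv_mul, div_le_div_iff₀ (by positivity) hm] at jensen
  nlinarith

theorem sq_intervalIntegral_le_mul_intervalIntegral_sq {f : ℝ → ℝ} {a b : ℝ} (hab : a ≤ b)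
    (hf : Continuous f) : (∫ x in a..b, f x) ^ 2 ≤ (b - a) * ∫ x in a..b, f x ^ 2 := by
  simp only [intervalIntegral.integral_of_le hab]
  convert sq_setIntegral_le_measureReal_mul_setIntegral_sq (μ := volume) measure_Ioc_lt_top.ne
    hf.integrableOn_Ioc (hf.pow 2).integrableOn_Ioc
  simp [hab]

theorem Function.Periodic.two_mul_abs_sub_le_integral_abs_deriv {g : ℝ → ℝ} {T : ℝ}
    (hg : Periodic g T) (hT : 0 < T) (hd : Differentiable ℝ g) (hc : Continuous (deriv g))
    (x y b : ℝ) : 2 * |g x - g y| ≤ ∫ θ in b..b + T, |deriv g θ| := by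
  suffices h : ∀ x y, 2 * (g x - g y) ≤ ∫ θ in b..b + T, |deriv g θ| by
    cases abs_cases (g x - g y) <;> linarith [h x y, h y x]
  intro x y
  -- The arcs `[y', x]` and `[x, y' + T]` make up one period.
  obtain ⟨y', ⟨hy'₁, hy'₂⟩, hgy⟩ := hg.exists_mem_Ico hT y (x - T)
  have ftc : ∀ u w, ∫ θ in u..w, deriv g θ = g w - g u := fun u w =>
    intervalIntegral.integral_deriv_eq_sub (fun z _ => hd z) (hc.intervalIntegrable u w)
  have arc₁ : g x - g y' ≤ ∫ θ in y'..x, |deriv g θ| := by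
    rw [← ftc]
    exact (le_abs_self _).trans (intervalIntegral.abs_integral_le_integral_abs (by linarith))
  have arc₂ : g x - g y' ≤ ∫ θ in x..y' + T, |deriv g θ| := by
    rw [← hg y', ← neg_sub, ← ftc]
    exact (neg_le_abs _).trans (intervalIntegral.abs_integral_le_integral_abs (by linarith))
  have full : (∫ θ in y'..x, |deriv g θ|) + ∫ θ in x..y' + T, |deriv g θ|
      = ∫ θ in b..b + T, |deriv g θ| := by
    rw [intervalIntegral.integral_add_adjacent_intervals (hc.abs.intervalIntegrable _ _)
      (hc.abs.intervalIntegrable _ _)]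
    have hg' : Periodic (deriv g) T := fun θ => by
      rw [← deriv_comp_add_const, show (fun x => g (x + T)) = g from funext hg]
    exact (hg'.comp abs).intervalIntegral_add_eq y' b
  linarith

theorem Function.Periodic.sq_sub_le_mul_integral_deriv_sq {g : ℝ → ℝ} {T : ℝ}
    (hg : Periodic g T) (hT : 0 < T) (hd : Differentiable ℝ g) (hc : Continuous (deriv g))
    (x y b : ℝ) : (g x - g y) ^ 2 ≤ T / 4 * ∫ θ in b..b + T, deriv g θ ^ 2 := by
  have arcs := hg.two_mul_abs_sub_le_integral_abs_deriv hT hd hc x y b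
  have cs := sq_intervalIntegral_le_mul_intervalIntegral_sq (a := b) (b := b + T)
    (by linarith) hc.abs
  simp only [sq_abs, add_sub_cancel_left] at cs
  calc (g x - g y) ^ 2 = |g x - g y| ^ 2 := (sq_abs _).symm
    _ ≤ ((∫ θ in b..b + T, |deriv g θ|) / 2) ^ 2 :=
        pow_le_pow_left₀ (abs_nonneg _) (by linarith) 2
    _ ≤ _ := by linarith

noncomputable def osc {α : Type*} (f : α → ℝ) (s : Set α) : ℝ :=
  sSup (f '' s) - sInf (f '' s)

section osc

variable {α : Type*} {f : α → ℝ} {s t : Set α}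

theorem osc_comp {β : Type*} (f : β → ℝ) (g : α → β) (s : Set α) :
    osc (f ∘ g) s = osc f (g '' s) := by
  simp only [osc, image_comp]

theorem osc_nonneg (hs : s.Nonempty) (ha : BddAbove (f '' s)) (hb : BddBelow (f '' s)) :
    0 ≤ osc f s := by
  obtain ⟨x, hx⟩ := hs
  have := le_csSup ha (mem_image_of_mem f hx)
  have := csInf_le hb (mem_image_of_mem f hx)
  unfold osc
  linarith

theorem osc_mono (hst : s ⊆ t) (hs : s.Nonempty) (ha : BddAbove (f '' t))
    (hb : BddBelow (f '' t)) : osc f s ≤ osc f t := by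
  have := csSup_le_csSup ha (hs.image f) (image_mono hst)
  have := csInf_le_csInf hb (hs.image f) (image_mono hst)
  unfold osc
  linarith

theorem IsCompact.exists_osc_eq [TopologicalSpace α] (hs : IsCompact s) (hne : s.Nonempty)
    (hf : ContinuousOn f s) : ∃ x ∈ s, ∃ y ∈ s, osc f s = f x - f y := by
  obtain ⟨x, hx, hsup⟩ := hs.exists_sSup_image_eq hne hf
  obtain ⟨y, hy, hinf⟩ := hs.exists_sInf_image_eq hne hf
  exact ⟨x, hx, y, hy, by rw [osc, hsup, hinf]⟩

end osc

theorem osc_ball_le_osc_sphere {α : Type*} [PseudoMetricSpace α] [ProperSpace α] {v : α → ℝ}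
    {a : α} {r t : ℝ} (hv : ContinuousOn v (closedBall a t)) (hr : 0 < r) (hrt : r ≤ t)
    (hmono : sSup (v '' closedBall a t) = sSup (v '' sphere a t) ∧
      sInf (v '' closedBall a t) = sInf (v '' sphere a t)) :
    osc v (ball a r) ≤ osc v (sphere a t) := by
  have hK := (isCompact_closedBall a t).image_of_continuousOn hv
  calc osc v (ball a r) ≤ osc v (closedBall a t) :=
        osc_mono (ball_subset_closedBall.trans (closedBall_subset_closedBall hrt))
          ⟨a, mem_ball_self hr⟩ hK.bddAbove hK.bddBelow
    _ = osc v (sphere a t) := by rw [osc, osc, hmono.1, hmono.2]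

theorem ContDiffOn.integrableOn_ball_norm_fderiv_sq {E F : Type*} [NormedAddCommGroup E]
    [NormedSpace ℝ E] [ProperSpace E] [MeasurableSpace E] [OpensMeasurableSpace E]
    [NormedAddCommGroup F] [NormedSpace ℝ F] [CompleteSpace F] {μ : Measure E}
    [IsFiniteMeasureOnCompacts μ] {v : E → F} {c : E} {R : ℝ}
    (hv : ContDiffOn ℝ 1 v (closedBall c R)) (hR : 0 < R) :
    IntegrableOn (fun x => ‖fderiv ℝ v x‖ ^ 2) (ball c R) μ := by
  have hud : UniqueDiffOn ℝ (closedBall c R) := uniqueDiffOn_convex (convex_closedBall c R)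
    ⟨c, ball_subset_interior_closedBall (mem_ball_self hR)⟩
  obtain ⟨C, hC⟩ := (isCompact_closedBall c R).exists_bound_of_continuousOn
    (hv.continuousOn_fderivWithin hud le_rfl)
  refine Measure.integrableOn_of_bounded (M := C ^ 2) measure_ball_lt_top.ne
    ((measurable_fderiv ℝ v).norm.pow_const 2).aestronglyMeasurable
    ((ae_restrict_iff' measurableSet_ball).2 (.of_forall fun x hx => ?_))
  rw [norm_pow, norm_norm, ← fderivWithin_of_mem_nhds (closedBall_mem_nhds_of_mem hx)]
  exact pow_le_pow_left₀ (norm_nonneg _) (hC x (ball_subset_closedBall hx)) 2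

theorem LinearIsometryEquiv.norm_fderiv_comp {E F G : Type*} [NormedAddCommGroup E]
    [NormedSpace ℝ E] [NormedAddCommGroup F] [NormedSpace ℝ F] [NormedAddCommGroup G]
    [NormedSpace ℝ G] (e : E ≃ₗᵢ[ℝ] F) (v : F → G) (x : E) :
    ‖fderiv ℝ (v ∘ e) x‖ = ‖fderiv ℝ v (e x)‖ := by
  rw [← e.coe_toContinuousLinearEquiv, e.toContinuousLinearEquiv.comp_right_fderiv]
  exact ContinuousLinearMap.opNorm_comp_linearIsometryEquiv _ e

theorem sq_osc_sphere_le_mul_integral_circleMap {w : ℂ → ℝ} {U : Set ℂ} (hU : IsOpen U)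
    (hw : ContDiffOn ℝ 1 w U) {c : ℂ} {t : ℝ} (ht : sphere c |t| ⊆ U) :
    osc w (sphere c |t|) ^ 2
      ≤ π / 2 * t ^ 2 * ∫ θ in (-π)..π, ‖fderiv ℝ w (circleMap c t θ)‖ ^ 2 := by
  have hmem : ∀ θ, circleMap c t θ ∈ U := fun θ => ht (circleMap_mem_sphere' c t θ)
  set g := w ∘ circleMap c t
  have hderiv : ∀ θ,
      HasDerivAt g (fderiv ℝ w (circleMap c t θ) (circleMap 0 t θ * Complex.I)) θ :=
    fun θ => ((hw.differentiableOn one_ne_zero _ (hmem θ)).differentiableAt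
      (hU.mem_nhds (hmem θ))).hasFDerivAt.comp_hasDerivAt θ (hasDerivAt_circleMap c t θ)
  have hderiv_eq : deriv g =
      fun θ => fderiv ℝ w (circleMap c t θ) (circleMap 0 t θ * Complex.I) :=
    funext fun θ => (hderiv θ).deriv
  have hfderiv_cont : Continuous fun θ => fderiv ℝ w (circleMap c t θ) :=
    (hw.continuousOn_fderiv_of_isOpen hU le_rfl).comp_continuous (continuous_circleMap c t) hmem
  have hcont : Continuous (deriv g) := by
    rw [hderiv_eq]
    exact hfderiv_cont.clm_apply ((continuous_circleMap 0 t).mul continuous_const)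
  have hbound : ∀ θ, deriv g θ ^ 2 ≤ t ^ 2 * ‖fderiv ℝ w (circleMap c t θ)‖ ^ 2 := by
    intro θ
    have := (fderiv ℝ w (circleMap c t θ)).le_opNorm (circleMap 0 t θ * Complex.I)
    rw [norm_mul, norm_circleMap_zero, Complex.norm_I, mul_one, ← Real.norm_eq_abs] at this
    rw [hderiv_eq, ← sq_abs, ← Real.norm_eq_abs]
    calc _ ≤ (‖fderiv ℝ w (circleMap c t θ)‖ * |t|) ^ 2 :=
          pow_le_pow_left₀ (norm_nonneg _) this 2
      _ = _ := by rw [mul_pow, sq_abs, mul_comm]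
  obtain ⟨x, hx, y, hy, hosc⟩ := (isCompact_sphere c |t|).exists_osc_eq
    (NormedSpace.sphere_nonempty.2 (abs_nonneg t)) (hw.continuousOn.mono ht)
  rw [← range_circleMap] at hx hy
  obtain ⟨θ₁, rfl⟩ := hx
  obtain ⟨θ₂, rfl⟩ := hy
  calc osc w (sphere c |t|) ^ 2 = (g θ₁ - g θ₂) ^ 2 := by rw [hosc]; rfl
    _ ≤ 2 * π / 4 * ∫ θ in (-π)..(-π + 2 * π), deriv g θ ^ 2 :=
        ((periodic_circleMap c t).comp w).sq_sub_le_mul_integral_deriv_sq two_pi_pos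
          (fun θ => (hderiv θ).differentiableAt) hcont θ₁ θ₂ (-π)
    _ ≤ 2 * π / 4 * (t ^ 2 * ∫ θ in (-π)..π, ‖fderiv ℝ w (circleMap c t θ)‖ ^ 2) := by
        rw [show -π + 2 * π = π by ring]
        refine mul_le_mul_of_nonneg_left ?_ (by linarith [pi_pos])
        rw [← intervalIntegral.integral_const_mul]
        exact intervalIntegral.integral_mono_on (by linarith [pi_pos])
          ((hcont.pow 2).intervalIntegrable _ _)
          (((hfderiv_cont.norm.pow 2).const_mul _).intervalIntegrable _ _) fun θ _ => hbound θ
    _ = _ := by ring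

theorem circleMap_eq_add_polarCoord_symm (c : ℂ) (p : ℝ × ℝ) :
    circleMap c p.1 p.2 = c + Complex.polarCoord.symm p := by
  simp [circleMap, Complex.exp_mul_I, ← Complex.ofReal_cos, ← Complex.ofReal_sin]

theorem lintegral_ball_sdiff_ball_eq {c : ℂ} {r R : ℝ} (hr : 0 < r) {F : ℂ → ℝ≥0∞}
    (hF : Measurable F) :
    ∫⁻ z in ball c R \ ball c r, F z
      = ∫⁻ t in Ico r R, ENNReal.ofReal t * ∫⁻ θ in Ioo (-π) π, F (circleMap c t θ) := by
  set A := ball c R \ ball c r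
  have hA : MeasurableSet A := measurableSet_ball.diff measurableSet_ball
  have hmem : ∀ t > 0, ∀ θ, circleMap c t θ ∈ A ↔ t ∈ Ico r R := by
    intro t ht θ
    simp [A, mem_ball, dist_eq_norm, circleMap_sub_center, abs_of_pos ht, and_comm]
  calc ∫⁻ z in A, F z = ∫⁻ z, A.indicator F (c + z) := by
        rw [← lintegral_indicator hA, lintegral_add_left_eq_self]
    _ = ∫⁻ p in Ioi 0 ×ˢ Ioo (-π) π,
          ENNReal.ofReal p.1 * A.indicator F (circleMap c p.1 p.2) := by
        rw [← Complex.lintegral_comp_polarCoord_symm, polarCoord_target]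
        simp only [circleMap_eq_add_polarCoord_symm, smul_eq_mul]
    _ = ∫⁻ t in Ioi 0, ∫⁻ θ in Ioo (-π) π,
          ENNReal.ofReal t * A.indicator F (circleMap c t θ) := by
        rw [Measure.volume_eq_prod, ← Measure.prod_restrict, lintegral_prod]
        exact (measurable_fst.ennreal_ofReal.mul
          ((hF.indicator hA).comp circleMap.continuous.measurable)).aemeasurable
    _ = ∫⁻ t in Ioi 0, (Ico r R).indicator
          (fun t => ENNReal.ofReal t * ∫⁻ θ in Ioo (-π) π, F (circleMap c t θ)) t := by
        refine setLIntegral_congr_fun measurableSet_Ioi fun t ht => ?_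
        by_cases h : t ∈ Ico r R
        · simp only [indicator_of_mem h, indicator_of_mem ((hmem t ht _).2 h)]
          exact lintegral_const_mul' _ _ ENNReal.ofReal_ne_top
        · simp [indicator_of_notMem h, indicator_of_notMem (mt (hmem t ht _).1 h)]
    _ = _ := by
        rw [setLIntegral_indicator measurableSet_Ico,
          (inter_eq_left (t := Ioi 0)).2 fun t ht => hr.trans_le ht.1]

theorem setLIntegral_Ioo_ofReal_eq {f : ℝ → ℝ} (hf : Continuous f) (hf0 : ∀ x, 0 ≤ f x)
    {a b : ℝ} (hab : a ≤ b) :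
    ∫⁻ x in Ioo a b, ENNReal.ofReal (f x) = ENNReal.ofReal (∫ x in a..b, f x) := by
  rw [intervalIntegral.integral_of_le hab, integral_Ioc_eq_integral_Ioo,
    ofReal_integral_eq_lintegral_ofReal
      (hf.integrableOn_Icc.mono_set Ioo_subset_Icc_self) (.of_forall hf0)]

theorem ofReal_mul_log_le_setLIntegral_Ico {g : ℝ → ℝ≥0∞} {k r R : ℝ} (hk : 0 ≤ k) (hr : 0 < r)
    (hrR : r ≤ R) (hg : ∀ t ∈ Ico r R, ENNReal.ofReal (k * t⁻¹) ≤ g t) :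
    ENNReal.ofReal (k * log (R / r)) ≤ ∫⁻ t in Ico r R, g t := by
  have hcont : ContinuousOn (fun t : ℝ => k * t⁻¹) (Icc r R) :=
    continuousOn_const.mul (continuousOn_inv₀.mono fun t ht => (hr.trans_le ht.1).ne')
  have hlog : ∫ t in Ico r R, k * t⁻¹ = k * log (R / r) := by
    rw [integral_Ico_eq_integral_Ioo, ← integral_Ioc_eq_integral_Ioo,
      ← intervalIntegral.integral_of_le hrR, intervalIntegral.integral_const_mul,
      integral_inv_of_pos hr (hr.trans_le hrR)]
  rw [← hlog, ofReal_integral_eq_lintegral_ofReal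
    ((hcont.integrableOn_compact isCompact_Icc).mono_set Ico_subset_Icc_self)
    ((ae_restrict_iff' measurableSet_Ico).2 (.of_forall fun t ht =>
      mul_nonneg hk (inv_nonneg.2 (hr.trans_le ht.1).le)))]
  exact setLIntegral_mono' measurableSet_Ico hg

theorem two_mul_sq_osc_ball_mul_log_le {c : ℂ} {r R : ℝ} {w : ℂ → ℝ}
    (hw : ContDiffOn ℝ 1 w (closedBall c R)) (hr : 0 < r) (hrR : r < R)
    (hosc : ∀ t ∈ Ico r R, osc w (ball c r) ≤ osc w (sphere c t)) :
    2 * osc w (ball c r) ^ 2 * log (R / r)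
      ≤ π * ∫ z in ball c R \ ball c r, ‖fderiv ℝ w z‖ ^ 2 := by
  set m := osc w (ball c r)
  have hw' : ContDiffOn ℝ 1 w (ball c R) := hw.mono ball_subset_closedBall
  have hm : 0 ≤ m := by
    have hK := (isCompact_closedBall c R).image_of_continuousOn hw.continuousOn
    have hsub : w '' ball c r ⊆ w '' closedBall c R :=
      image_mono (ball_subset_closedBall.trans (closedBall_subset_closedBall hrR.le))
    exact osc_nonneg ⟨c, mem_ball_self hr⟩ (hK.bddAbove.mono hsub) (hK.bddBelow.mono hsub)
  have circle : ∀ t ∈ Ico r R, ENNReal.ofReal (2 * m ^ 2 / π * t⁻¹) ≤ ENNReal.ofReal t *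
      ∫⁻ θ in Ioo (-π) π, ENNReal.ofReal (‖fderiv ℝ w (circleMap c t θ)‖ ^ 2) := by
    intro t ht
    have ht0 : 0 < t := hr.trans_le ht.1
    have hsphere : sphere c |t| ⊆ ball c R := by
      rw [abs_of_pos ht0]
      exact sphere_subset_ball ht.2
    have hcont : Continuous fun θ => ‖fderiv ℝ w (circleMap c t θ)‖ ^ 2 :=
      (((hw'.continuousOn_fderiv_of_isOpen isOpen_ball le_rfl).comp_continuous
        (continuous_circleMap c t) fun θ => hsphere (circleMap_mem_sphere' c t θ)).norm).pow 2
    have key := sq_osc_sphere_le_mul_integral_circleMap isOpen_ball hw' hsphere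
    rw [abs_of_pos ht0] at key
    have hsq : m ^ 2 ≤ osc w (sphere c t) ^ 2 := pow_le_pow_left₀ hm (hosc t ht) 2
    rw [setLIntegral_Ioo_ofReal_eq hcont (fun θ => by positivity) (by linarith [pi_pos]),
      ← ENNReal.ofReal_mul ht0.le]
    refine ENNReal.ofReal_le_ofReal ?_
    rw [show 2 * m ^ 2 / π * t⁻¹ = 2 * m ^ 2 / (π * t) by field_simp,
      div_le_iff₀ (by positivity)]
    nlinarith [pi_pos]
  have hint : IntegrableOn (fun z => ‖fderiv ℝ w z‖ ^ 2) (ball c R \ ball c r) :=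
    (hw.integrableOn_ball_norm_fderiv_sq (hr.trans hrR)).mono_set sdiff_subset
  have hlower := ofReal_mul_log_le_setLIntegral_Ico (by positivity) hr hrR.le circle
  rw [← lintegral_ball_sdiff_ball_eq hr ((measurable_fderiv ℝ w).norm.pow_const 2).ennreal_ofReal,
    ← ofReal_integral_eq_lintegral_ofReal hint (.of_forall fun _ => by positivity),
    ENNReal.ofReal_le_ofReal_iff (integral_nonneg fun _ => by positivity)] at hlower
  calc 2 * m ^ 2 * log (R / r) = π * (2 * m ^ 2 / π * log (R / r)) := by field_simp
    _ ≤ _ := by gcongr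

theorem stmt_4_general (a : EuclideanSpace ℝ (Fin 2)) (R : ℝ)
    (v : EuclideanSpace ℝ (Fin 2) → ℝ) (hv : ContDiffOn ℝ 1 v (closedBall a R))
    (hmono : ∀ t : ℝ, 0 < t → closedBall a t ⊆ ball a R →
      sSup (v '' closedBall a t) = sSup (v '' sphere a t) ∧
      sInf (v '' closedBall a t) = sInf (v '' sphere a t))
    (r : ℝ) (hr0 : 0 < r) (hrR : r < R) :
    (sSup (v '' ball a r) - sInf (v '' ball a r)) ^ 2 * Real.log (R / r) ≤
      π * ∫ x in ball a R \ ball a r, ‖fderiv ℝ v x‖ ^ 2 := by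
  let e : ℂ ≃ₗᵢ[ℝ] EuclideanSpace ℝ (Fin 2) := Complex.orthonormalBasisOneI.repr
  have ha : e (e.symm a) = a := e.apply_symm_apply a
  have hw : ContDiffOn ℝ 1 (v ∘ e) (closedBall (e.symm a) R) := by
    rw [← e.preimage_closedBall]
    exact hv.comp_continuousLinearMap (e : ℂ →L[ℝ] EuclideanSpace ℝ (Fin 2))
  have hosc : ∀ t ∈ Ico r R,
      osc (v ∘ e) (ball (e.symm a) r) ≤ osc (v ∘ e) (sphere (e.symm a) t) := by
    intro t ht
    rw [osc_comp, osc_comp, e.image_ball, e.image_sphere, ha]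
    exact osc_ball_le_osc_sphere (hv.continuousOn.mono (closedBall_subset_closedBall ht.2.le))
      hr0 ht.1 (hmono t (hr0.trans_le ht.1) (closedBall_subset_ball ht.2))
  have henergy : ∫ z in ball (e.symm a) R \ ball (e.symm a) r, ‖fderiv ℝ (v ∘ e) z‖ ^ 2
      = ∫ x in ball a R \ ball a r, ‖fderiv ℝ v x‖ ^ 2 := by
    conv_rhs => rw [← ha, ← e.image_ball, ← e.image_ball, ← image_sdiff e.injective,
      e.measurePreserving.setIntegral_image_emb e.toHomeomorph.measurableEmbedding]
    simp_rw [e.norm_fderiv_comp]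
  have main := two_mul_sq_osc_ball_mul_log_le hw hr0 hrR hosc
  rw [osc_comp, e.image_ball, ha, henergy] at main
  have hlog : 0 ≤ log (R / r) := log_nonneg ((one_le_div hr0).2 hrR.le)
  change osc v (ball a r) ^ 2 * log (R / r) ≤ _
  nlinarith [mul_nonneg (sq_nonneg (osc v (ball a r))) hlog]

/-- Lebesgue's oscillation lemma: for a C¹ monotone (in the sense of Lebesgue) function on a
    planar ball, (osc_{B_r} v)² log(R/r) ≤ π ∫_{B_R \ B_r} |∇v|². -/
theorem stmt_4 (a : EuclideanSpace ℝ (Fin 2)) (R : ℝ) (hR : 0 < R)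
    (v : EuclideanSpace ℝ (Fin 2) → ℝ) (hv : ContDiffOn ℝ 1 v (closedBall a R))
    (hmono : ∀ t : ℝ, 0 < t → closedBall a t ⊆ ball a R →
      sSup (v '' closedBall a t) = sSup (v '' sphere a t) ∧
      sInf (v '' closedBall a t) = sInf (v '' sphere a t))
    (r : ℝ) (hr0 : 0 < r) (hrR : r < R) :
    (sSup (v '' ball a r) - sInf (v '' ball a r)) ^ 2 * Real.log (R / r) ≤
      π * ∫ x in ball a R \ ball a r, ‖fderiv ℝ v x‖ ^ 2 :=
  stmt_4_general a R v hv hmono r hr0 hrR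
end

section
/- Let $1 < p < 2$, let $\mu$ be a finite measure on a set $\Omega$, and suppose $(f_\epsilon)_{\epsilon > 0}$, $f$ are measurable real-valued functions with $\sup_\epsilon \int_\Omega (\epsilon + f_\epsilon^2 + f^2)^{p/2} d\mu < \infty$ and $\int_\Omega (\epsilon + f_\epsilon^2 + f^2)^{(p-2)/2} |f_\epsilon - f|^2 \, d\mu \to 0$ as $\epsilon \to 0$. Then $\int_\Omega |f_\epsilon - f|^p d\mu \to 0$. -/
/-!
Write `w = ε + F_ε² + f²` and `u = F_ε - f`. Pointwise
`|u|^p = (w^((p-2)/2) |u|²)^(p/2) · (w^(p/2))^(1-p/2)`, so Hölder's inequality with exponents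
`2/p` and `2/(2-p)` bounds `∫ |u|^p` by `(∫ w^((p-2)/2) |u|²)^(p/2) · B^(1-p/2)`, where `B` is the
uniform bound on `∫ w^(p/2)`. The first factor tends to `0`.
-/

open MeasureTheory Filter

lemma abs_rpow_eq_weighted_sq_rpow_mul_rpow {w : ℝ} (hw : 0 < w) (a p : ℝ) :
    |a| ^ p = (w ^ ((p - 2) / 2) * |a| ^ 2) ^ (p / 2) * (w ^ (p / 2)) ^ (1 - p / 2) := by
  have ha : 0 ≤ |a| := abs_nonneg a
  rw [Real.mul_rpow (Real.rpow_nonneg hw.le _) (by positivity), ← Real.rpow_natCast |a| 2,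
    ← Real.rpow_mul hw.le, ← Real.rpow_mul ha, ← Real.rpow_mul hw.le, mul_right_comm,
    ← Real.rpow_add hw]
  have hw_exp : (p - 2) / 2 * (p / 2) + p / 2 * (1 - p / 2) = 0 := by ring
  have ha_exp : ((2 : ℕ) : ℝ) * (p / 2) = p := by push_cast; ring
  rw [hw_exp, ha_exp, Real.rpow_zero, one_mul]

section

variable {α : Type*} [MeasurableSpace α] {μ : Measure α} {g h : α → ℝ}

lemma MeasureTheory.Integrable.memLp_rpow_of_nonneg (hg : Integrable g μ) (hg0 : 0 ≤ᵐ[μ] g)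
    {θ : ℝ} (hθ : 0 < θ) : MemLp (fun x => g x ^ θ) (ENNReal.ofReal θ⁻¹) μ := by
  have hLp := (memLp_one_iff_integrable.mpr hg).norm_rpow_div (ENNReal.ofReal θ)
  rw [ENNReal.toReal_ofReal hθ.le, ← ENNReal.ofReal_one, ← ENNReal.ofReal_div_of_pos hθ,
    one_div] at hLp
  refine hLp.ae_eq ?_
  filter_upwards [hg0] with x hx
  rw [Real.norm_of_nonneg hx]

theorem integral_rpow_mul_rpow_le_of_nonneg (hg : Integrable g μ) (hh : Integrable h μ)
    (hg0 : 0 ≤ᵐ[μ] g) (hh0 : 0 ≤ᵐ[μ] h) {θ : ℝ} (hθ0 : 0 < θ) (hθ1 : θ < 1) :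
    ∫ x, g x ^ θ * h x ^ (1 - θ) ∂μ ≤ (∫ x, g x ∂μ) ^ θ * (∫ x, h x ∂μ) ^ (1 - θ) := by
  have hθ1' : 0 < 1 - θ := sub_pos.mpr hθ1
  have hconj : θ⁻¹.HolderConjugate (1 - θ)⁻¹ :=
    Real.holderConjugate_iff.mpr ⟨(one_lt_inv₀ hθ0).mpr hθ1, by simp⟩
  have holder := integral_mul_le_Lp_mul_Lq_of_nonneg hconj
    (hg0.mono fun x hx => Real.rpow_nonneg hx θ) (hh0.mono fun x hx => Real.rpow_nonneg hx _)
    (hg.memLp_rpow_of_nonneg hg0 hθ0) (hh.memLp_rpow_of_nonneg hh0 hθ1')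
  have hg_eq : ∫ x, (g x ^ θ) ^ θ⁻¹ ∂μ = ∫ x, g x ∂μ := by
    refine integral_congr_ae ?_
    filter_upwards [hg0] with x hx
    exact Real.rpow_rpow_inv hx hθ0.ne'
  have hh_eq : ∫ x, (h x ^ (1 - θ)) ^ (1 - θ)⁻¹ ∂μ = ∫ x, h x ∂μ := by
    refine integral_congr_ae ?_
    filter_upwards [hh0] with x hx
    exact Real.rpow_rpow_inv hx hθ1'.ne'
  simpa only [hg_eq, hh_eq, one_div, inv_inv] using holder

theorem integral_abs_rpow_le_of_weighted_sq {w u : α → ℝ} (hw : ∀ x, 0 < w x) {p : ℝ}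
    (hp0 : 0 < p) (hp2 : p < 2)
    (hwu : Integrable (fun x => w x ^ ((p - 2) / 2) * |u x| ^ 2) μ)
    (hwp : Integrable (fun x => w x ^ (p / 2)) μ) :
    ∫ x, |u x| ^ p ∂μ ≤
      (∫ x, w x ^ ((p - 2) / 2) * |u x| ^ 2 ∂μ) ^ (p / 2) *
        (∫ x, w x ^ (p / 2) ∂μ) ^ (1 - p / 2) := by
  refine (integral_congr_ae (ae_of_all _ fun x =>
    abs_rpow_eq_weighted_sq_rpow_mul_rpow (hw x) (u x) p)).trans_le ?_
  exact integral_rpow_mul_rpow_le_of_nonneg hwu hwp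
    (ae_of_all _ fun x => mul_nonneg (Real.rpow_nonneg (hw x).le _) (by positivity))
    (ae_of_all _ fun x => Real.rpow_nonneg (hw x).le _) (by positivity) (by linarith)

end

theorem stmt_15_general {Ω : Type*} [MeasurableSpace Ω] (μ : Measure Ω)
    (p : ℝ) (hp1 : 1 < p) (hp2 : p < 2)
    (F : ℝ → Ω → ℝ) (f : Ω → ℝ)
    (hbdd : ∃ B : ℝ, ∀ ε, 0 < ε →
      Integrable (fun x => (ε + F ε x ^ 2 + f x ^ 2) ^ (p / 2)) μ ∧
      ∫ x, (ε + F ε x ^ 2 + f x ^ 2) ^ (p / 2) ∂μ ≤ B)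
    (hint : ∀ ε, 0 < ε →
      Integrable (fun x => (ε + F ε x ^ 2 + f x ^ 2) ^ ((p - 2) / 2) * |F ε x - f x| ^ 2) μ)
    (hconv : Tendsto (fun ε => ∫ x, (ε + F ε x ^ 2 + f x ^ 2) ^ ((p - 2) / 2) * |F ε x - f x| ^ 2 ∂μ)
      (nhdsWithin 0 (Set.Ioi 0)) (nhds 0)) :
    Tendsto (fun ε => ∫ x, |F ε x - f x| ^ p ∂μ) (nhdsWithin 0 (Set.Ioi 0)) (nhds 0) := by
  obtain ⟨B, hB⟩ := hbdd
  have hp0 : 0 < p := by linarith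
  have hupper : Tendsto (fun ε =>
      (∫ x, (ε + F ε x ^ 2 + f x ^ 2) ^ ((p - 2) / 2) * |F ε x - f x| ^ 2 ∂μ) ^ (p / 2) *
        B ^ (1 - p / 2)) (nhdsWithin 0 (Set.Ioi 0)) (nhds 0) := by
    simpa only [zero_mul] using
      (hconv.rpow_const_nhds_zero (p := p / 2) (by positivity)).mul_const (B ^ (1 - p / 2))
  refine squeeze_zero' (Eventually.of_forall fun ε => integral_nonneg fun x => by positivity)
    ?_ hupper
  filter_upwards [self_mem_nhdsWithin] with ε (hε : 0 < ε)
  have hw : ∀ x, 0 < ε + F ε x ^ 2 + f x ^ 2 := fun x => by positivity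
  refine (integral_abs_rpow_le_of_weighted_sq hw hp0 hp2 (hint ε hε) (hB ε hε).1).trans ?_
  gcongr
  · linarith
  · exact (hB ε hε).2

/-- From weighted L² convergence with degenerate weight to Lᵖ convergence, 1 < p < 2. -/
theorem stmt_15 {Ω : Type*} [MeasurableSpace Ω] (μ : Measure Ω) [IsFiniteMeasure μ]
    (p : ℝ) (hp1 : 1 < p) (hp2 : p < 2)
    (F : ℝ → Ω → ℝ) (f : Ω → ℝ) (hF : ∀ ε, 0 < ε → Measurable (F ε)) (hf : Measurable f)
    (hbdd : ∃ B : ℝ, ∀ ε, 0 < ε →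
      Integrable (fun x => (ε + F ε x ^ 2 + f x ^ 2) ^ (p / 2)) μ ∧
      ∫ x, (ε + F ε x ^ 2 + f x ^ 2) ^ (p / 2) ∂μ ≤ B)
    (hint : ∀ ε, 0 < ε →
      Integrable (fun x => (ε + F ε x ^ 2 + f x ^ 2) ^ ((p - 2) / 2) * |F ε x - f x| ^ 2) μ)
    (hconv : Tendsto (fun ε => ∫ x, (ε + F ε x ^ 2 + f x ^ 2) ^ ((p - 2) / 2) * |F ε x - f x| ^ 2 ∂μ)
      (nhdsWithin 0 (Set.Ioi 0)) (nhds 0)) :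
    Tendsto (fun ε => ∫ x, |F ε x - f x| ^ p ∂μ) (nhdsWithin 0 (Set.Ioi 0)) (nhds 0) :=
  stmt_15_general μ p hp1 hp2 F f hbdd hint hconv
end
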